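/- For every real number a ≥ 1, every real number t ≥ 0, and all nonnegative reals P, Q: (1/a²)·(1+a²t)·(P+Q) ≤ ((1+at)²/(1+t))·P + (1+t)·Q ≤ a²·(1+a²t)·(P+Q). (Equivalently, the pulled-back quadratic form |df|² and the induced metric ds² on the graph S_D satisfy (1/a²)·ds² ≤ |df|² ≤ a²·ds² pointwise, so the bi-Lipschitz constant of f is bounded by a.) -/
import Mathlib

/-- Pointwise comparison of the induced metric `ds² = (1+a²t)(dr² + r²dθ²)` and
the pulled-back metric `|df|² = ((1+at)²/(1+t))dr² + (1+t)r²dθ²` on the graph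
`S_D`: evaluated on a tangent vector with `dr² = P` and `r²dθ² = Q`, one has
`(1/a²)·ds² ≤ |df|² ≤ a²·ds²`, so the bi-Lipschitz constant of `f` is at most `a`. -/
theorem metric_comparison (a t P Q : ℝ) (ha : 1 ≤ a) (ht : 0 ≤ t)
    (hP : 0 ≤ P) (hQ : 0 ≤ Q) :
    (1 / a ^ 2) * ((1 + a ^ 2 * t) * (P + Q)) ≤
        ((1 + a * t) ^ 2 / (1 + t)) * P + (1 + t) * Q ∧
      ((1 + a * t) ^ 2 / (1 + t)) * P + (1 + t) * Q ≤
        a ^ 2 * ((1 + a ^ 2 * t) * (P + Q)) := by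
  have h1t : (0:ℝ) < 1 + t := by linarith
  have ha2 : (0:ℝ) < a ^ 2 := by positivity
  have h21 : (1:ℝ) ≤ a ^ 2 := one_le_pow₀ ha
  have h31 : (1:ℝ) ≤ a ^ 3 := one_le_pow₀ ha
  have h32 : a ^ 2 ≤ a ^ 3 := pow_le_pow_right₀ ha (by norm_num)
  have h42 : a ^ 2 ≤ a ^ 4 := pow_le_pow_right₀ ha (by norm_num)
  have e1 : 0 ≤ t * (a ^ 3 - a ^ 2) := mul_nonneg ht (by linarith)
  have e2 : 0 ≤ t * (a ^ 3 - 1) := mul_nonneg ht (by linarith)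
  have e3 : 0 ≤ t * t * (a ^ 4 - a ^ 2) := mul_nonneg (mul_nonneg ht ht) (by linarith)
  have e4 : 0 ≤ t * (a ^ 4 - a) := mul_nonneg ht (by nlinarith)
  have e5 : 0 ≤ t * (a ^ 2 - a) := mul_nonneg ht (by nlinarith)
  have e6 : 0 ≤ t * (a ^ 2 - 1) := mul_nonneg ht (by linarith)
  have e7 : 0 ≤ t * t * a ^ 4 := by positivity
  have hA : (1 + a ^ 2 * t) / a ^ 2 ≤ (1 + a * t) ^ 2 / (1 + t) := by
    rw [div_le_div_iff₀ ha2 h1t]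
    nlinarith [e1, e2, e3]
  have hB : (1 + a ^ 2 * t) / a ^ 2 ≤ 1 + t := by
    rw [div_le_iff₀ ha2]
    nlinarith [e6]
  have hC : (1 + a * t) ^ 2 / (1 + t) ≤ a ^ 2 * (1 + a ^ 2 * t) := by
    rw [div_le_iff₀ h1t]
    nlinarith [e4, e5, e3]
  have hD : 1 + t ≤ a ^ 2 * (1 + a ^ 2 * t) := by nlinarith [e6, mul_nonneg ht (sub_nonneg.mpr h42)]
  constructor
  · have := add_le_add (mul_le_mul_of_nonneg_right hA hP)
      (mul_le_mul_of_nonneg_right hB hQ)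
    calc (1 / a ^ 2) * ((1 + a ^ 2 * t) * (P + Q))
        = (1 + a ^ 2 * t) / a ^ 2 * P + (1 + a ^ 2 * t) / a ^ 2 * Q := by ring
      _ ≤ _ := this
  · have := add_le_add (mul_le_mul_of_nonneg_right hC hP)
      (mul_le_mul_of_nonneg_right hD hQ)
    calc ((1 + a * t) ^ 2 / (1 + t)) * P + (1 + t) * Q
        ≤ a ^ 2 * (1 + a ^ 2 * t) * P + a ^ 2 * (1 + a ^ 2 * t) * Q := this
      _ = a ^ 2 * ((1 + a ^ 2 * t) * (P + Q)) := by ring
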